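/- Let d, k be real numbers with 0 < d < k < 1 and (k+d)² = 4d, and set c = √((k−d)/(2d)). For s ≥ 0 let b(s) = (d+1)s + 1 − k and q(s) = (ds − k)(s + 1) + 1, and define λ₁(ξ₁,ξ₂) = (−b(s) + √(b(s)² − 4q(s)))/2 with s = ξ₁² + ξ₂² (the larger root of the dispersion relation λ² + b(s)λ + q(s) = 0). Then b(c²)² − 4q(c²) > 0, so λ₁ is real-analytic in a neighborhood of the point (0, c), and at (0, c): λ₁(0,c) = 0; the partial derivatives ∂λ₁/∂ξ₁, ∂²λ₁/∂ξ₁², ∂³λ₁/∂ξ₁³ all vanish; (1/4!) ∂⁴λ₁/∂ξ₁⁴(0,c) = −2d²/((k+d)(1−d)) ≠ 0; moreover ∂λ₁/∂ξ₂(0,c) = 0 and ∂²λ₁/∂ξ₂²(0,c) ≠ 0. -/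

import Mathlib

/-! The condition `(k + d)² = 4d` makes `q(s) = d (s - c²)²` a perfect square. Rationalizing the
numerator, `λ₁ = -2q / (b + √(b² - 4q)) = (s - c²)² g(s)` near `s = c²`, with `g` analytic and
`g(c²) = -d / b(c²) = -2d² / ((k + d)(1 - d))`, the discriminant there being `b(c²)² > 0`.
Along `ξ₂ = c` we have `s - c² = ξ₁²`, so `λ₁ = ξ₁⁴ g(ξ₁² + c²)` vanishes to order exactly four
at `ξ₁ = 0`; along `ξ₁ = 0`, `s - c² = (ξ₂ - c)(ξ₂ + c)` gives a zero of order exactly two at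
`ξ₂ = c`. -/

open Real Filter Topology

theorem iteratedDeriv_sub_pow_mul_of_le {𝕜 : Type*} [NontriviallyNormedField 𝕜]
    {h : 𝕜 → 𝕜} {a : 𝕜} {m n : ℕ} (hh : ContDiffAt 𝕜 n h a) (hn : n ≤ m) :
    iteratedDeriv n (fun x => (x - a) ^ m * h x) a = if n = m then m.factorial * h a else 0 := by
  have hpow (i : ℕ) :
      iteratedDeriv i (fun x => (x - a) ^ m) a = if i = m then (m.factorial : 𝕜) else 0 := by
    simp only [iteratedDeriv_comp_sub_const i (· ^ m) a, sub_self, iteratedDeriv_fun_pow_zero]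
    split_ifs <;> simp
  rw [iteratedDeriv_fun_mul (by fun_prop) hh]
  simp only [hpow, mul_ite, ite_mul, mul_zero, zero_mul]
  rcases hn.lt_or_eq with hlt | rfl
  · rw [if_neg hlt.ne, Finset.sum_eq_zero]
    intro i hi
    rw [if_neg (by simp at hi; omega)]
  · simp

section DoubleZero

variable {𝕜 : Type*} [NontriviallyNormedField 𝕜] {F G : 𝕜 → 𝕜} {s₀ : 𝕜} {n : ℕ}

theorem iteratedDeriv_comp_sq_add_of_eventuallyEq
    (hFG : F =ᶠ[𝓝 s₀] fun s => (s - s₀) ^ 2 * G s) (hG : ContDiffAt 𝕜 n G s₀) (hn : n ≤ 4) :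
    iteratedDeriv n (fun x => F (x ^ 2 + s₀)) 0 =
      if n = 4 then (Nat.factorial 4 : 𝕜) * G s₀ else 0 := by
  have hslice : (fun x => F (x ^ 2 + s₀)) =ᶠ[𝓝 0] fun x => (x - 0) ^ 4 * G (x ^ 2 + s₀) := by
    have hφ : Tendsto (fun x : 𝕜 => x ^ 2 + s₀) (𝓝 0) (𝓝 s₀) :=
      (by fun_prop : Continuous fun x : 𝕜 => x ^ 2 + s₀).tendsto' 0 s₀ (by simp)
    filter_upwards [hφ.eventually hFG] with x hx
    rw [hx]; ring
  have hGφ : ContDiffAt 𝕜 n (fun x => G (x ^ 2 + s₀)) 0 := by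
    refine ContDiffAt.comp (g := G) (0 : 𝕜) ?_ (by fun_prop)
    simpa using hG
  rw [hslice.iteratedDeriv_eq, iteratedDeriv_sub_pow_mul_of_le hGφ hn]
  simp

theorem iteratedDeriv_comp_sq_of_eventuallyEq {c : 𝕜} (hc : c ^ 2 = s₀)
    (hFG : F =ᶠ[𝓝 s₀] fun s => (s - s₀) ^ 2 * G s) (hG : ContDiffAt 𝕜 n G s₀) (hn : n ≤ 2) :
    iteratedDeriv n (fun x => F (x ^ 2)) c =
      if n = 2 then (Nat.factorial 2 : 𝕜) * ((2 * c) ^ 2 * G s₀) else 0 := by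
  subst hc
  have hslice : (fun x => F (x ^ 2)) =ᶠ[𝓝 c] fun x => (x - c) ^ 2 * ((x + c) ^ 2 * G (x ^ 2)) := by
    have hφ : Tendsto (fun x : 𝕜 => x ^ 2) (𝓝 c) (𝓝 (c ^ 2)) :=
      (continuous_pow 2).tendsto c
    filter_upwards [hφ.eventually hFG] with x hx
    rw [hx]; ring
  have hGφ : ContDiffAt 𝕜 n (fun x => (x + c) ^ 2 * G (x ^ 2)) c :=
    (by fun_prop : ContDiffAt 𝕜 n (fun x => (x + c) ^ 2) c).mul
      (ContDiffAt.comp (g := G) c hG (by fun_prop))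
  rw [hslice.iteratedDeriv_eq, iteratedDeriv_sub_pow_mul_of_le hGφ hn]
  simp [two_mul]

end DoubleZero

theorem neg_add_sqrt_discrim_div_two_eq {b q : ℝ} (hb : 0 < b) (hD : 0 ≤ b ^ 2 - 4 * q) :
    (-b + √(b ^ 2 - 4 * q)) / 2 = -2 * q / (b + √(b ^ 2 - 4 * q)) := by
  have hN : 0 < b + √(b ^ 2 - 4 * q) := by positivity
  rw [eq_div_iff hN.ne']
  linear_combination (1 / 2 : ℝ) * sq_sqrt hD

namespace TuringDispersion

variable (d k : ℝ)

def b (s : ℝ) : ℝ := (d + 1) * s + 1 - k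

def q (s : ℝ) : ℝ := (d * s - k) * (s + 1) + 1

def discr (s : ℝ) : ℝ := b d k s ^ 2 - 4 * q d k s

noncomputable def lam (s : ℝ) : ℝ := (-b d k s + √(discr d k s)) / 2

/-- The cofactor `g` in `lam = (s - sCrit)² * g` near `sCrit`. -/
noncomputable def lamQuot (s : ℝ) : ℝ := -2 * d / (b d k s + √(discr d k s))

/-- The critical wavenumber squared, `c²`. -/
noncomputable def sCrit : ℝ := (k - d) / (2 * d)

variable {d k}

theorem q_eq_mul_sq (hd : d ≠ 0) (hcrit : (k + d) ^ 2 = 4 * d) (s : ℝ) :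
    q d k s = d * (s - sCrit d k) ^ 2 := by
  unfold q sCrit
  field_simp
  linear_combination -hcrit

theorem sCrit_pos (hd : 0 < d) (hdk : d < k) : 0 < sCrit d k :=
  div_pos (by linarith) (by linarith)

theorem b_sCrit (hd : d ≠ 0) : b d k (sCrit d k) = (k + d) * (1 - d) / (2 * d) := by
  unfold b sCrit
  field_simp
  ring

theorem continuous_b : Continuous (b d k) := by unfold b; fun_prop

theorem continuous_discr : Continuous (discr d k) := by unfold discr b q; fun_prop

theorem analyticAt_b {s : ℝ} : AnalyticAt ℝ (b d k) s := by unfold b; fun_prop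

theorem analyticAt_sqrt_discr {s : ℝ} (hD : 0 < discr d k s) :
    AnalyticAt ℝ (fun s => √(discr d k s)) s :=
  (contDiffAt_sqrt hD.ne').analyticAt.comp (by unfold discr b q; fun_prop)

theorem analyticAt_lamQuot {s : ℝ} (hb : 0 < b d k s) (hD : 0 < discr d k s) :
    AnalyticAt ℝ (lamQuot d k) s :=
  analyticAt_const.div (analyticAt_b.add (analyticAt_sqrt_discr hD)) (by positivity)

theorem analyticAt_lam {s : ℝ} (hD : 0 < discr d k s) : AnalyticAt ℝ (lam d k) s :=
  (analyticAt_b.neg.add (analyticAt_sqrt_discr hD)).div analyticAt_const two_ne_zero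

theorem b_sCrit_pos (hd : 0 < d) (hdk : d < k) (hk1 : k < 1) : 0 < b d k (sCrit d k) := by
  rw [b_sCrit hd.ne']
  have : 0 < k + d := by linarith
  have : 0 < 1 - d := by linarith
  positivity

theorem discr_sCrit (hd : d ≠ 0) (hcrit : (k + d) ^ 2 = 4 * d) :
    discr d k (sCrit d k) = b d k (sCrit d k) ^ 2 := by
  simp [discr, q_eq_mul_sq hd hcrit]

theorem eventually_b_pos_and_discr_pos (hd : 0 < d) (hdk : d < k) (hk1 : k < 1)
    (hcrit : (k + d) ^ 2 = 4 * d) :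
    ∀ᶠ s in 𝓝 (sCrit d k), 0 < b d k s ∧ 0 < discr d k s := by
  have hb := b_sCrit_pos hd hdk hk1
  have hD : 0 < discr d k (sCrit d k) := by rw [discr_sCrit hd.ne' hcrit]; positivity
  exact (continuous_b.continuousAt.eventually (eventually_gt_nhds hb)).and
    (continuous_discr.continuousAt.eventually (eventually_gt_nhds hD))

theorem lam_eventuallyEq (hd : 0 < d) (hdk : d < k) (hk1 : k < 1)
    (hcrit : (k + d) ^ 2 = 4 * d) :
    lam d k =ᶠ[𝓝 (sCrit d k)] fun s => (s - sCrit d k) ^ 2 * lamQuot d k s := by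
  filter_upwards [eventually_b_pos_and_discr_pos hd hdk hk1 hcrit] with s ⟨hb, hD⟩
  rw [lam, lamQuot, discr, neg_add_sqrt_discrim_div_two_eq hb hD.le, q_eq_mul_sq hd.ne' hcrit]
  ring

theorem lamQuot_sCrit (hd : 0 < d) (hdk : d < k) (hk1 : k < 1)
    (hcrit : (k + d) ^ 2 = 4 * d) :
    lamQuot d k (sCrit d k) = -(2 * d ^ 2) / ((k + d) * (1 - d)) := by
  rw [lamQuot, discr_sCrit hd.ne' hcrit, sqrt_sq (b_sCrit_pos hd hdk hk1).le, b_sCrit hd.ne']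
  have : 0 < k + d := by linarith
  have : 0 < 1 - d := by linarith
  field_simp
  ring

end TuringDispersion

/-- Example 3.5. Degeneracy of the dispersion relation of the Turing system
at the critical wavenumber `(0, c)`. -/
theorem turing_dispersion_degeneracy (d k : ℝ) (hd0 : 0 < d) (hdk : d < k) (hk1 : k < 1)
    (hcrit : (k + d) ^ 2 = 4 * d) :
    -- discriminant, larger root of λ² + b(s)λ + q(s) = 0 with s = ξ₁² + ξ₂²
    ∀ (c : ℝ), c = Real.sqrt ((k - d) / (2 * d)) →
    ∀ (b q : ℝ → ℝ), (∀ s, b s = (d + 1) * s + 1 - k) →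
      (∀ s, q s = (d * s - k) * (s + 1) + 1) →
    ∀ (lam₁ : ℝ → ℝ → ℝ),
      (∀ ξ₁ ξ₂, lam₁ ξ₁ ξ₂ =
        (-b (ξ₁ ^ 2 + ξ₂ ^ 2) + Real.sqrt (b (ξ₁ ^ 2 + ξ₂ ^ 2) ^ 2
          - 4 * q (ξ₁ ^ 2 + ξ₂ ^ 2))) / 2) →
    -- positive discriminant at the critical wavenumber
    (0 < b (c ^ 2) ^ 2 - 4 * q (c ^ 2)) ∧
    -- real-analyticity near (0, c)
    (∀ᶠ p in nhds ((0 : ℝ), c), AnalyticAt ℝ (fun p : ℝ × ℝ => lam₁ p.1 p.2) p) ∧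
    -- value and ξ₁-partial derivatives at (0, c)
    lam₁ 0 c = 0 ∧
    iteratedDeriv 1 (fun ξ₁ => lam₁ ξ₁ c) 0 = 0 ∧
    iteratedDeriv 2 (fun ξ₁ => lam₁ ξ₁ c) 0 = 0 ∧
    iteratedDeriv 3 (fun ξ₁ => lam₁ ξ₁ c) 0 = 0 ∧
    (1 / (Nat.factorial 4 : ℝ)) * iteratedDeriv 4 (fun ξ₁ => lam₁ ξ₁ c) 0
      = -(2 * d ^ 2) / ((k + d) * (1 - d)) ∧
    -(2 * d ^ 2) / ((k + d) * (1 - d)) ≠ 0 ∧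
    -- ξ₂-partial derivatives at (0, c)
    deriv (fun ξ₂ => lam₁ 0 ξ₂) c = 0 ∧
    iteratedDeriv 2 (fun ξ₂ => lam₁ 0 ξ₂) c ≠ 0 := by
  open TuringDispersion in
  intro c hc b' q' hb hq lam₁ hlam
  obtain rfl : b' = b d k := funext hb
  obtain rfl : q' = q d k := funext hq
  obtain rfl : lam₁ = fun ξ₁ ξ₂ => lam d k (ξ₁ ^ 2 + ξ₂ ^ 2) := funext₂ hlam
  have hc2 : c ^ 2 = sCrit d k := hc ▸ sq_sqrt (sCrit_pos hd0 hdk).le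
  have hc0 : 0 < c := hc ▸ sqrt_pos.2 (sCrit_pos hd0 hdk)
  have hnear := eventually_b_pos_and_discr_pos hd0 hdk hk1 hcrit
  have hlamEq := lam_eventuallyEq hd0 hdk hk1 hcrit
  have hquot := analyticAt_lamQuot hnear.self_of_nhds.1 hnear.self_of_nhds.2
  have hξ₁ (n : ℕ) (hn : n ≤ 4) :=
    iteratedDeriv_comp_sq_add_of_eventuallyEq (n := n) hlamEq hquot.contDiffAt hn
  have hξ₂ (n : ℕ) (hn : n ≤ 2) :=
    iteratedDeriv_comp_sq_of_eventuallyEq (n := n) hc2 hlamEq hquot.contDiffAt hn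
  have hcoeff : -(2 * d ^ 2) / ((k + d) * (1 - d)) < 0 :=
    div_neg_of_neg_of_pos (by nlinarith) (mul_pos (by linarith) (by linarith))
  have hsq : Tendsto (fun p : ℝ × ℝ => p.1 ^ 2 + p.2 ^ 2) (𝓝 (0, c)) (𝓝 (sCrit d k)) :=
    (by fun_prop : Continuous _).tendsto' _ _ (by simp [hc2])
  simp only [hc2, zero_pow two_ne_zero, zero_add]
  refine ⟨hnear.self_of_nhds.2, ?_, by simp [hlamEq.eq_of_nhds], by simp [hξ₁ 1],
    by simp [hξ₁ 2], by simp [hξ₁ 3], ?_, hcoeff.ne, by simp [← iteratedDeriv_one, hξ₂ 1], ?_⟩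
  · filter_upwards [hsq.eventually hnear] with p hp
    exact (analyticAt_lam hp.2).comp (f := fun p : ℝ × ℝ => p.1 ^ 2 + p.2 ^ 2)
      ((analyticAt_fst.fun_pow 2).fun_add (analyticAt_snd.fun_pow 2))
  · simp [hξ₁ 4, lamQuot_sCrit hd0 hdk hk1 hcrit, Nat.factorial_ne_zero]
  · simp [hξ₂ 2, lamQuot_sCrit hd0 hdk hk1 hcrit, hc0.ne', hcoeff.ne]
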